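/- arXiv:2211.00227 — 4 statements merged into one kernel-verified Lean document; each statement's English description precedes it below -/
import Mathlib

section
/- Let x be drawn from an isotropic distribution on ℝ^d (E[x xᵀ] = I), let X ∈ ℝ^{d×n} have i.i.d. columns from this distribution with n ≤ d and X of full column rank almost surely, with the column space of X uniformly (Haar) distributed among n-dimensional subspaces. For a fixed ω ∈ ℝ^{c×d} and labels y = ωX, the minimum-norm least-squares estimator ŵ = y X† satisfies risk R(ŵ) = E_{x,X}[‖ωx − ŵx‖²] = (1 − n/d)‖ω‖_F². -/
open MeasureTheory ProbabilityTheory Matrix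

instance matrixMeasurableSpace (m n : Type*) : MeasurableSpace (Matrix m n ℝ) :=
  show MeasurableSpace (m → n → ℝ) from inferInstance

lemma entry_meas' {d : ℕ} (a b : Fin d) :
    Measurable (fun M : Matrix (Fin d) (Fin d) ℝ => M a b) :=
  (measurable_pi_apply b).comp (measurable_pi_apply a)

lemma entry_meas {d : ℕ} (D : Matrix (Fin d) (Fin d) ℝ) (j k : Fin d) :
    Measurable (fun M : Matrix (Fin d) (Fin d) ℝ => (M * D * Mᵀ) j k) := by
  simp only [Matrix.mul_apply, Matrix.transpose_apply]
  apply Finset.measurable_sum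
  intro b _
  exact (Finset.measurable_sum _ fun a _ => (entry_meas' j a).mul measurable_const).mul
    (entry_meas' k b)

/-- The four Penrose conditions characterizing the Moore–Penrose pseudoinverse. -/
def IsMoorePenrose {m n : ℕ} (X : Matrix (Fin m) (Fin n) ℝ)
    (Y : Matrix (Fin n) (Fin m) ℝ) : Prop :=
  X * Y * X = X ∧ Y * X * Y = Y ∧ (X * Y)ᵀ = X * Y ∧ (Y * X)ᵀ = Y * X

/-- risk of the minimum-norm least-squares estimator `ŵ = y X† = w X X†`
for isotropic `x`, with the column space of `X ∈ ℝ^{d×n}` Haar-uniformly distributed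
(realized as `X X† = W D Wᵀ` with `W` Haar orthogonal and `D` a rank-`n` 0/1 diagonal):
`E_{x,X} ‖w x − ŵ x‖² = (1 − n/d) ‖w‖_F²`. -/
theorem risk_minimum_norm_least_squares
    (d n c : ℕ) (hn : n ≤ d) (hd : 0 < d)
    (Ω₁ Ω₂ : Type) [MeasureSpace Ω₁] [MeasureSpace Ω₂]
    [IsProbabilityMeasure (ℙ : Measure Ω₁)] [IsProbabilityMeasure (ℙ : Measure Ω₂)]
    -- isotropic distribution of the test point x : E[x xᵀ] = I
    (x : Ω₁ → Fin d → ℝ) (hxmeas : Measurable x)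
    (hiso : ∀ i j, (∫ ω₁, x ω₁ i * x ω₁ j) = if i = j then (1 : ℝ) else 0)
    -- the data matrix X, its Moore–Penrose pseudoinverse, and the Haar-distributed
    -- rank-n projection X X† onto its column space
    (X : Ω₂ → Matrix (Fin d) (Fin n) ℝ) (hXmeas : Measurable X)
    (Xd : Ω₂ → Matrix (Fin n) (Fin d) ℝ)
    (hpinv : ∀ ω₂, IsMoorePenrose (X ω₂) (Xd ω₂))
    (W : Ω₂ → Matrix (Fin d) (Fin d) ℝ) (hWmeas : Measurable W)
    (hWorth : ∀ ω₂, W ω₂ ∈ Matrix.orthogonalGroup (Fin d) ℝ)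
    (hHaar : ∀ V₀ ∈ Matrix.orthogonalGroup (Fin d) ℝ,
      Measure.map (fun ω₂ => V₀ * W ω₂) (ℙ : Measure Ω₂) = Measure.map W (ℙ : Measure Ω₂))
    (hproj : ∀ ω₂, X ω₂ * Xd ω₂ =
      W ω₂ * Matrix.diagonal (fun i : Fin d => if (i : ℕ) < n then (1 : ℝ) else 0) * (W ω₂)ᵀ)
    -- the true linear model and its minimum-norm estimate ŵ = (w X) X†
    (w : Matrix (Fin c) (Fin d) ℝ)
    (what : Ω₂ → Matrix (Fin c) (Fin d) ℝ)
    (hwhat : ∀ ω₂, what ω₂ = (w * X ω₂) * Xd ω₂) :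
    (∫ ω₂, ∫ ω₁, ∑ i, ((w *ᵥ x ω₁) i - (what ω₂ *ᵥ x ω₁) i) ^ 2) =
      (1 - (n : ℝ) / d) * ∑ i, ∑ j, (w i j) ^ 2 := by
  classical
  set D : Matrix (Fin d) (Fin d) ℝ :=
    Matrix.diagonal (fun i : Fin d => if (i : ℕ) < n then (1 : ℝ) else 0) with hD
  set P : Ω₂ → Matrix (Fin d) (Fin d) ℝ := fun ω₂ => W ω₂ * D * (W ω₂)ᵀ with hPdef
  -- basic facts about W
  have hWtW : ∀ ω₂, (W ω₂)ᵀ * W ω₂ = 1 := by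
    intro ω₂
    have := (Matrix.mem_orthogonalGroup_iff' (Fin d) ℝ).mp (hWorth ω₂)
    simpa [Matrix.star_eq_conjTranspose, Matrix.conjTranspose_eq_transpose_of_trivial] using this
  have hWWt : ∀ ω₂, W ω₂ * (W ω₂)ᵀ = 1 := by
    intro ω₂
    have := (Matrix.mem_orthogonalGroup_iff (Fin d) ℝ).mp (hWorth ω₂)
    simpa [Matrix.star_eq_conjTranspose, Matrix.conjTranspose_eq_transpose_of_trivial] using this
  have hDD : D * D = D := by
    have hfun : (fun i : Fin d => (if (i:ℕ) < n then (1:ℝ) else 0) * (if (i:ℕ) < n then (1:ℝ) else 0))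
        = fun i : Fin d => if (i:ℕ) < n then (1:ℝ) else 0 := by
      funext i; by_cases h : (i:ℕ) < n <;> simp [h]
    rw [hD, Matrix.diagonal_mul_diagonal, hfun]
  have hDt : Dᵀ = D := Matrix.diagonal_transpose _
  have hPsymm : ∀ ω₂, (P ω₂)ᵀ = P ω₂ := by
    intro ω₂
    simp [hPdef, Matrix.transpose_mul, hDt, Matrix.mul_assoc]
  have hPidem : ∀ ω₂, P ω₂ * P ω₂ = P ω₂ := by
    intro ω₂
    calc W ω₂ * D * (W ω₂)ᵀ * (W ω₂ * D * (W ω₂)ᵀ)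
        = W ω₂ * D * ((W ω₂)ᵀ * W ω₂) * D * (W ω₂)ᵀ := by
          simp only [Matrix.mul_assoc]
      _ = W ω₂ * D * (W ω₂)ᵀ := by rw [hWtW]; simp only [Matrix.mul_one, Matrix.mul_assoc, hDD]
  -- entrywise formula for P
  have hPentry : ∀ ω₂ (j k : Fin d),
      P ω₂ j k = ∑ b, (W ω₂ j b * (if (b:ℕ) < n then (1:ℝ) else 0)) * W ω₂ k b := by
    intro ω₂ j k
    show (W ω₂ * D * (W ω₂)ᵀ) j k = _
    rw [Matrix.mul_apply]
    refine Finset.sum_congr rfl fun b _ => ?_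
    rw [Matrix.transpose_apply, hD, Matrix.mul_diagonal]
  -- bound on entries of W
  have hWbd : ∀ ω₂ (a b : Fin d), |W ω₂ a b| ≤ 1 := by
    intro ω₂ a b
    have h1 : (W ω₂ * (W ω₂)ᵀ) a a = 1 := by rw [hWWt]; simp [Matrix.one_apply]
    rw [Matrix.mul_apply] at h1
    have hsq : W ω₂ a b * W ω₂ a b ≤ 1 := by
      rw [← h1]
      have hnn : ∀ t ∈ Finset.univ, (0:ℝ) ≤ W ω₂ a t * (W ω₂)ᵀ t a := by
        intro t _; rw [Matrix.transpose_apply]; exact mul_self_nonneg _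
      have := Finset.single_le_sum hnn (Finset.mem_univ b)
      simpa [Matrix.transpose_apply] using this
    exact abs_le_one_iff_mul_self_le_one.mpr hsq
  -- measurability and integrability of P entries
  have hPmeas : ∀ j k, Measurable (fun ω₂ => P ω₂ j k) := fun j k =>
    (entry_meas D j k).comp hWmeas
  have hPbd : ∀ ω₂ (j k : Fin d), |P ω₂ j k| ≤ d := by
    intro ω₂ j k
    rw [hPentry]
    calc |∑ b, (W ω₂ j b * (if (b:ℕ) < n then (1:ℝ) else 0)) * W ω₂ k b|
        ≤ ∑ b : Fin d, |(W ω₂ j b * (if (b:ℕ) < n then (1:ℝ) else 0)) * W ω₂ k b| :=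
          Finset.abs_sum_le_sum_abs _ _
      _ ≤ ∑ _b : Fin d, (1:ℝ) := by
          apply Finset.sum_le_sum
          intro b _
          rw [abs_mul, abs_mul]
          have h1 := hWbd ω₂ j b
          have h2 := hWbd ω₂ k b
          have h3 : |(if (b:ℕ) < n then (1:ℝ) else 0)| ≤ 1 := by
            by_cases h : (b:ℕ) < n <;> simp [h]
          calc |W ω₂ j b| * |(if (b:ℕ) < n then (1:ℝ) else 0)| * |W ω₂ k b|
              ≤ 1 * 1 * 1 := by
                gcongr <;> first | exact abs_nonneg _ | assumption
            _ = 1 := by ring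
      _ = d := by simp
  have hPint : ∀ j k, Integrable (fun ω₂ => P ω₂ j k) := by
    intro j k
    apply Integrable.mono' (integrable_const (d:ℝ)) (hPmeas j k).aestronglyMeasurable
    filter_upwards with ω₂
    simpa using hPbd ω₂ j k
  -- Haar invariance
  have key : ∀ V₀ ∈ Matrix.orthogonalGroup (Fin d) ℝ, ∀ j k : Fin d,
      (∫ ω₂, P ω₂ j k) = ∫ ω₂, (V₀ * P ω₂ * V₀ᵀ) j k := by
    intro V₀ hV₀ j k
    have hg : Measurable (fun M : Matrix (Fin d) (Fin d) ℝ => (M * D * Mᵀ) j k) :=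
      entry_meas D j k
    have hVWmeas : Measurable (fun ω₂ => V₀ * W ω₂) := by
      apply measurable_pi_lambda
      intro a
      apply measurable_pi_lambda
      intro b
      simp only [Matrix.mul_apply]
      exact Finset.measurable_sum _ fun t _ =>
        (((entry_meas' t b).comp hWmeas).const_mul _)
    have e1 : (∫ ω₂, P ω₂ j k) =
        ∫ M, (M * D * Mᵀ) j k ∂(Measure.map W (ℙ : Measure Ω₂)) := by
      rw [integral_map hWmeas.aemeasurable hg.aestronglyMeasurable]
    have e2 : (∫ M, (M * D * Mᵀ) j k ∂(Measure.map W (ℙ : Measure Ω₂))) =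
        ∫ M, (M * D * Mᵀ) j k ∂(Measure.map (fun ω₂ => V₀ * W ω₂) (ℙ : Measure Ω₂)) := by
      rw [hHaar V₀ hV₀]
    have e3 : (∫ M, (M * D * Mᵀ) j k ∂(Measure.map (fun ω₂ => V₀ * W ω₂) (ℙ : Measure Ω₂))) =
        ∫ ω₂, ((V₀ * W ω₂) * D * (V₀ * W ω₂)ᵀ) j k := by
      rw [integral_map hVWmeas.aemeasurable hg.aestronglyMeasurable]
    rw [e1, e2, e3]
    congr 1; funext ω₂
    rw [Matrix.transpose_mul]
    simp only [hPdef, Matrix.mul_assoc]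
  -- off-diagonal expectations vanish
  have hoffdiag : ∀ j k : Fin d, j ≠ k → (∫ ω₂, P ω₂ j k) = 0 := by
    intro j k hjk
    set s : Fin d → ℝ := fun i => if i = j then -1 else 1 with hs
    have hsorth : Matrix.diagonal s ∈ Matrix.orthogonalGroup (Fin d) ℝ := by
      rw [Matrix.mem_orthogonalGroup_iff]
      rw [Matrix.diagonal_transpose, Matrix.diagonal_mul_diagonal]
      have hfun : (fun i : Fin d => s i * s i) = fun _ => (1:ℝ) := by
        funext i; by_cases h : i = j <;> simp [hs, h]
      rw [hfun, Matrix.diagonal_one]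
    have hkey := key (Matrix.diagonal s) hsorth j k
    have heval : ∀ ω₂, (Matrix.diagonal s * P ω₂ * (Matrix.diagonal s)ᵀ) j k = - P ω₂ j k := by
      intro ω₂
      rw [Matrix.diagonal_transpose, Matrix.mul_diagonal, Matrix.diagonal_mul]
      simp [hs, hjk, Ne.symm hjk]
    rw [show (fun ω₂ => (Matrix.diagonal s * P ω₂ * (Matrix.diagonal s)ᵀ) j k)
        = fun ω₂ => - P ω₂ j k from funext heval] at hkey
    rw [integral_neg] at hkey
    linarith
  -- diagonal expectations are equal
  have hdiageq : ∀ j k : Fin d, (∫ ω₂, P ω₂ j j) = ∫ ω₂, P ω₂ k k := by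
    intro j k
    set σ : Equiv.Perm (Fin d) := Equiv.swap j k with hσ
    set T : Matrix (Fin d) (Fin d) ℝ := Matrix.of (fun a b => if σ a = b then (1:ℝ) else 0) with hT
    have hTentry : ∀ a b, T a b = if σ a = b then (1:ℝ) else 0 := fun a b => rfl
    have hTmulleft : ∀ (M : Matrix (Fin d) (Fin d) ℝ) a e, (T * M) a e = M (σ a) e := by
      intro M a e
      rw [Matrix.mul_apply]
      simp [hTentry, ite_mul, Finset.sum_ite_eq]
    have hTmulright : ∀ (M : Matrix (Fin d) (Fin d) ℝ) a e, (M * Tᵀ) a e = M a (σ e) := by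
      intro M a e
      rw [Matrix.mul_apply]
      simp [Matrix.transpose_apply, hTentry, mul_ite, Finset.sum_ite_eq]
    have hTorth : T ∈ Matrix.orthogonalGroup (Fin d) ℝ := by
      rw [Matrix.mem_orthogonalGroup_iff]
      ext a e
      rw [hTmulright]
      rw [hTentry]
      rw [Matrix.one_apply]
      by_cases h : a = e
      · simp [h]
      · have : σ a ≠ σ e := fun hh => h (σ.injective hh)
        simp [h, this]
    have hkey := key T hTorth j j
    have heval : ∀ ω₂, (T * P ω₂ * Tᵀ) j j = P ω₂ k k := by
      intro ω₂
      rw [hTmulright, hTmulleft]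
      rw [hσ, Equiv.swap_apply_left]
    rw [show (fun ω₂ => (T * P ω₂ * Tᵀ) j j) = fun ω₂ => P ω₂ k k from funext heval] at hkey
    exact hkey
  -- trace of P is n
  have htr : ∀ ω₂, (∑ j, P ω₂ j j) = (n:ℝ) := by
    intro ω₂
    have h1 : ∀ b : Fin d, (∑ j, W ω₂ j b * W ω₂ j b) = 1 := by
      intro b
      have := congrFun (congrFun (hWtW ω₂) b) b
      rw [Matrix.mul_apply] at this
      simpa [Matrix.transpose_apply, Matrix.one_apply, mul_comm] using this
    calc (∑ j, P ω₂ j j)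
        = ∑ j, ∑ b, (W ω₂ j b * (if (b:ℕ) < n then (1:ℝ) else 0)) * W ω₂ j b :=
          Finset.sum_congr rfl fun j _ => hPentry ω₂ j j
      _ = ∑ b, ∑ j, (W ω₂ j b * (if (b:ℕ) < n then (1:ℝ) else 0)) * W ω₂ j b :=
          Finset.sum_comm
      _ = ∑ b : Fin d, (if (b:ℕ) < n then (1:ℝ) else 0) * ∑ j, W ω₂ j b * W ω₂ j b := by
          refine Finset.sum_congr rfl fun b _ => ?_
          rw [Finset.mul_sum]
          exact Finset.sum_congr rfl fun j _ => by ring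
      _ = ∑ b : Fin d, (if (b:ℕ) < n then (1:ℝ) else 0) := by
          refine Finset.sum_congr rfl fun b _ => ?_
          rw [h1 b, mul_one]
      _ = (n:ℝ) := by
          rw [Fin.sum_univ_eq_sum_range (fun i => if i < n then (1:ℝ) else 0) d]
          rw [Finset.sum_boole]
          have : (Finset.range d).filter (fun i => i < n) = Finset.range n := by
            ext i; simp; omega
          rw [this, Finset.card_range]
  -- value of diagonal expectations
  have hdiagval : ∀ j : Fin d, (∫ ω₂, P ω₂ j j) = (n:ℝ)/d := by
    intro j
    have hsum : (∑ k : Fin d, ∫ ω₂, P ω₂ k k) = (n:ℝ) := by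
      rw [← integral_finset_sum _ (fun k _ => hPint k k)]
      rw [show (fun ω₂ => ∑ k : Fin d, P ω₂ k k) = fun _ => (n:ℝ) from funext htr]
      simp
    have hall : (∑ k : Fin d, ∫ ω₂, P ω₂ k k) = d * ∫ ω₂, P ω₂ j j := by
      rw [Finset.sum_congr rfl (fun k _ => hdiageq k j)]
      simp [Finset.sum_const, mul_comm]
    have hd' : (d:ℝ) ≠ 0 := Nat.cast_ne_zero.mpr hd.ne'
    rw [eq_div_iff hd']
    rw [hall] at hsum
    linarith
  have hEP : ∀ j k : Fin d, (∫ ω₂, P ω₂ j k) = if j = k then (n:ℝ)/d else 0 := by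
    intro j k
    by_cases h : j = k
    · subst h; simp [hdiagval j]
    · simp [h, hoffdiag j k h]
  -- integrability of x products
  have hxmeas' : ∀ i : Fin d, Measurable (fun ω₁ => x ω₁ i) := fun i =>
    (measurable_pi_apply i).comp hxmeas
  have hx2int : ∀ i : Fin d, Integrable (fun ω₁ => x ω₁ i * x ω₁ i) := by
    intro i
    by_contra h
    have := hiso i i
    rw [integral_undef h] at this
    simp at this
  have hxijint : ∀ i j : Fin d, Integrable (fun ω₁ => x ω₁ i * x ω₁ j) := by
    intro i j
    apply Integrable.mono' (((hx2int i).add (hx2int j)).const_mul (1/2 : ℝ))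
      (((hxmeas' i).mul (hxmeas' j)).aestronglyMeasurable)
    filter_upwards with ω
    rw [Real.norm_eq_abs, Pi.mul_apply, abs_mul]
    simp only [Pi.add_apply]
    nlinarith [abs_nonneg (x ω i), abs_nonneg (x ω j), abs_mul_abs_self (x ω i),
      abs_mul_abs_self (x ω j), sq_nonneg (|x ω i| - |x ω j|)]
  -- the inner integral
  have hinner : ∀ M : Matrix (Fin c) (Fin d) ℝ,
      (∫ ω₁, ∑ i, ((M *ᵥ x ω₁) i)^2) = ∑ i, ∑ j, (M i j)^2 := by
    intro M
    have hexp : ∀ v : Fin d → ℝ,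
        (∑ i, ((M *ᵥ v) i)^2) = ∑ i, ∑ j, ∑ k, (M i j * M i k) * (v j * v k) := by
      intro v
      refine Finset.sum_congr rfl fun i _ => ?_
      have : (M *ᵥ v) i = ∑ j, M i j * v j := by
        simp [Matrix.mulVec, dotProduct]
      rw [this, sq, Finset.sum_mul_sum]
      exact Finset.sum_congr rfl fun j _ => Finset.sum_congr rfl fun k _ => by ring
    have hint1 : ∀ (a : ℝ) (j k : Fin d), Integrable (fun ω₁ => a * (x ω₁ j * x ω₁ k)) :=
      fun a j k => (hxijint j k).const_mul _
    rw [show (fun ω₁ => ∑ i, ((M *ᵥ x ω₁) i)^2)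
        = fun ω₁ => ∑ i, ∑ j, ∑ k, (M i j * M i k) * (x ω₁ j * x ω₁ k)
        from funext fun ω₁ => hexp (x ω₁)]
    rw [integral_finset_sum _ (fun i _ => integrable_finset_sum _
      (fun j _ => integrable_finset_sum _ (fun k _ => hint1 _ j k)))]
    refine Finset.sum_congr rfl fun i _ => ?_
    rw [integral_finset_sum _ (fun j _ => integrable_finset_sum _ (fun k _ => hint1 _ j k))]
    refine Finset.sum_congr rfl fun j _ => ?_
    rw [integral_finset_sum _ (fun k _ => hint1 _ j k)]
    calc (∑ k, ∫ ω₁, (M i j * M i k) * (x ω₁ j * x ω₁ k))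
        = ∑ k, (M i j * M i k) * (if j = k then (1:ℝ) else 0) := by
          refine Finset.sum_congr rfl fun k _ => ?_
          rw [MeasureTheory.integral_const_mul, hiso j k]
      _ = (M i j)^2 := by
          simp [mul_ite, Finset.sum_ite_eq, sq]
  -- what = w * P
  have hwhatP : ∀ ω₂, what ω₂ = w * P ω₂ := by
    intro ω₂
    rw [hwhat, Matrix.mul_assoc, hproj, hPdef]
  -- pointwise value of the inner integral
  have hpoint : ∀ ω₂, (∫ ω₁, ∑ i, ((w *ᵥ x ω₁) i - (what ω₂ *ᵥ x ω₁) i)^2)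
      = (∑ i, ∑ j, (w i j)^2) - ∑ i, (w * P ω₂ * wᵀ) i i := by
    intro ω₂
    have h1 : (fun ω₁ => ∑ i, ((w *ᵥ x ω₁) i - (what ω₂ *ᵥ x ω₁) i)^2)
        = fun ω₁ => ∑ i, (((w - what ω₂) *ᵥ x ω₁) i)^2 := by
      funext ω₁
      refine Finset.sum_congr rfl fun i _ => ?_
      rw [Matrix.sub_mulVec]
      simp
    rw [h1, hinner (w - what ω₂)]
    have hA : ∀ (A : Matrix (Fin c) (Fin d) ℝ), (∑ i, ∑ j, (A i j)^2) = ∑ i, (A * Aᵀ) i i := by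
      intro A
      refine Finset.sum_congr rfl fun i _ => ?_
      simp [Matrix.mul_apply, Matrix.transpose_apply, sq]
    rw [hA, hA]
    have e_wq : w * (w * P ω₂)ᵀ = w * P ω₂ * wᵀ := by
      rw [Matrix.transpose_mul, hPsymm]
      simp only [Matrix.mul_assoc]
    have e_qw : (w * P ω₂) * wᵀ = w * P ω₂ * wᵀ := rfl
    have e_qq : (w * P ω₂) * (w * P ω₂)ᵀ = w * P ω₂ * wᵀ := by
      rw [Matrix.transpose_mul, hPsymm]
      calc w * P ω₂ * (P ω₂ * wᵀ) = w * (P ω₂ * P ω₂) * wᵀ := by simp only [Matrix.mul_assoc]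
        _ = w * P ω₂ * wᵀ := by rw [hPidem]
    have hprod : (w - what ω₂) * (w - what ω₂)ᵀ = w * wᵀ - w * P ω₂ * wᵀ := by
      rw [hwhatP, Matrix.transpose_sub, Matrix.mul_sub, Matrix.sub_mul, Matrix.sub_mul,
        e_wq, e_qq]
      abel
    rw [hprod]
    simp [Matrix.sub_apply, Finset.sum_sub_distrib]
  -- trace term expansion
  have htrace : ∀ ω₂, (∑ i, (w * P ω₂ * wᵀ) i i)
      = ∑ i, ∑ j, ∑ k, (w i j * w i k) * P ω₂ j k := by
    intro ω₂
    refine Finset.sum_congr rfl fun i _ => ?_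
    simp only [Matrix.mul_apply, Matrix.transpose_apply, Finset.sum_mul]
    rw [Finset.sum_comm]
    exact Finset.sum_congr rfl fun j _ => Finset.sum_congr rfl fun k _ => by ring
  have htrint : Integrable (fun ω₂ => ∑ i, ∑ j, ∑ k, (w i j * w i k) * P ω₂ j k) :=
    integrable_finset_sum _ fun i _ => integrable_finset_sum _ fun j _ =>
      integrable_finset_sum _ fun k _ => (hPint j k).const_mul _
  -- final computation
  calc (∫ ω₂, ∫ ω₁, ∑ i, ((w *ᵥ x ω₁) i - (what ω₂ *ᵥ x ω₁) i) ^ 2)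
      = ∫ ω₂, ((∑ i, ∑ j, (w i j)^2) - ∑ i, ∑ j, ∑ k, (w i j * w i k) * P ω₂ j k) := by
        congr 1
        funext ω₂
        rw [hpoint ω₂, htrace ω₂]
    _ = (∑ i, ∑ j, (w i j)^2) - ∫ ω₂, ∑ i, ∑ j, ∑ k, (w i j * w i k) * P ω₂ j k := by
        rw [integral_sub (integrable_const _) htrint, integral_const]
        simp
    _ = (∑ i, ∑ j, (w i j)^2) - ∑ i, ∑ j, ∑ k, (w i j * w i k) * ∫ ω₂, P ω₂ j k := by
        rw [integral_finset_sum _ (fun i _ => integrable_finset_sum _ fun j _ =>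
          integrable_finset_sum _ fun k _ => (hPint j k).const_mul _)]
        congr 1
        refine Finset.sum_congr rfl fun i _ => ?_
        rw [integral_finset_sum _ (fun j _ => integrable_finset_sum _ fun k _ =>
          (hPint j k).const_mul _)]
        refine Finset.sum_congr rfl fun j _ => ?_
        rw [integral_finset_sum _ (fun k _ => (hPint j k).const_mul _)]
        exact Finset.sum_congr rfl fun k _ => MeasureTheory.integral_const_mul _ _
    _ = (∑ i, ∑ j, (w i j)^2) - ∑ i, ∑ j, (w i j)^2 * ((n:ℝ)/d) := by
        congr 1
        refine Finset.sum_congr rfl fun i _ => Finset.sum_congr rfl fun j _ => ?_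
        calc (∑ k, (w i j * w i k) * ∫ ω₂, P ω₂ j k)
            = ∑ k, (w i j * w i k) * (if j = k then (n:ℝ)/d else 0) := by
              refine Finset.sum_congr rfl fun k _ => ?_
              rw [hEP j k]
          _ = (w i j)^2 * ((n:ℝ)/d) := by
              simp [mul_ite, Finset.sum_ite_eq, sq]
    _ = (1 - (n:ℝ)/d) * ∑ i, ∑ j, (w i j)^2 := by
        rw [Finset.mul_sum]
        rw [← Finset.sum_sub_distrib]
        refine Finset.sum_congr rfl fun i _ => ?_
        rw [Finset.mul_sum, ← Finset.sum_sub_distrib]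
        exact Finset.sum_congr rfl fun j _ => by ring
end

section
/- Define R(S, T, C) = [1 − 2S²T + S²T² + (2S − 1 − ST)STC] M + S²T(2 − T) ε for fixed constants M > 0, ε ≥ 0, T ∈ (0,1], C ∈ [0,1]. If ε < (1 − C) M, then S ↦ R(S, T, C) is monotonically decreasing on S ∈ [0, 1]. -/
/-- the asymptotic projection risk
`R(S) = [1 − 2S²T + S²T² + (2S − 1 − ST)STC] M + S²T(2 − T) ε`
is monotonically decreasing in `S` on `[0, 1]` whenever `M > 0`, `ε ≥ 0`,
`T ∈ (0,1]`, `C ∈ [0,1]` and `ε < (1 - C) * M`. -/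
theorem projection_risk_antitone_in_source_samples
    (M ε T C : ℝ) (hM : 0 < M) (hε : 0 ≤ ε)
    (hT0 : 0 < T) (hT1 : T ≤ 1) (hC0 : 0 ≤ C) (hC1 : C ≤ 1)
    (hsim : ε < (1 - C) * M) :
    AntitoneOn (fun S : ℝ =>
        (1 - 2 * S ^ 2 * T + S ^ 2 * T ^ 2 + (2 * S - 1 - S * T) * S * T * C) * M +
          S ^ 2 * T * (2 - T) * ε)
      (Set.Icc (0 : ℝ) 1) := by
  intro a ha b hb hab
  simp only
  obtain ⟨ha0, ha1⟩ := ha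
  obtain ⟨hb0, hb1⟩ := hb
  have hα : 0 < T * (2 - T) * ((1 - C) * M - ε) := by
    have h2 : 0 < 2 - T := by linarith
    have h3 : 0 < (1 - C) * M - ε := by linarith
    exact mul_pos (mul_pos hT0 h2) h3
  nlinarith [mul_nonneg (mul_nonneg hT0.le hC0) hM.le,
    sq_nonneg (a + b), sq_nonneg (a - b),
    mul_nonneg (sub_nonneg.2 hab) hα.le,
    mul_nonneg (mul_nonneg (sub_nonneg.2 hab) (add_nonneg ha0 hb0)) hα.le]
end

section
/- (Translated predictor risk) Let ω_s ∈ ℝ^{c×d}, ω_t ∈ ℝ^{c×d}, let X_s ∈ ℝ^{d×n_s}, X_t ∈ ℝ^{d×n_t} be independent with Haar-uniform column spans (from isotropic distributions), y_s = ω_s X_s, y_t = ω_t X_t. Define ω̂_s = y_s X_s†, ω̂_c = (y_t − ω̂_s X_t) X_t†, and ω̂_trans = ω̂_s + ω̂_c. Then R(ω̂_trans) = (1 − n_t/d)[ ‖ω_s − ω_t‖_F² + (1 − n_s/d)(‖ω_t‖_F² − ‖ω_s − ω_t‖_F²) ], which can be written as [ρ + (1 − n_s/d)(1 − ρ)] R(ω̂_b)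 with ρ = ‖ω_s − ω_t‖_F²/‖ω_t‖_F² and R(ω̂_b) = (1 − n_t/d)‖ω_t‖_F² the baseline risk. -/
set_option linter.unusedSectionVars false
set_option maxHeartbeats 1000000

open MeasureTheory ProbabilityTheory Matrix

section RiskHelpers

variable {d : ℕ} {Ω : Type} [MeasureSpace Ω] [IsProbabilityMeasure (ℙ : Measure Ω)]

lemma risk_entry_meas (W : Ω → Matrix (Fin d) (Fin d) ℝ) (hW : Measurable W) (i j : Fin d) :
    Measurable (fun a => W a i j) :=
  (measurable_pi_apply j).comp ((measurable_pi_apply i).comp hW)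

lemma risk_row_sq (W : Matrix (Fin d) (Fin d) ℝ)
    (hW : W ∈ Matrix.orthogonalGroup (Fin d) ℝ) (i : Fin d) :
    ∑ l, W i l * W i l = 1 := by
  have h := (Matrix.mem_orthogonalGroup_iff (Fin d) ℝ).mp hW
  have := congrFun (congrFun h i) i
  simpa [Matrix.mul_apply, Matrix.one_apply, Matrix.star_eq_conjTranspose,
    Matrix.conjTranspose_apply] using this

lemma risk_col_sq (W : Matrix (Fin d) (Fin d) ℝ)
    (hW : W ∈ Matrix.orthogonalGroup (Fin d) ℝ) (k : Fin d) :
    ∑ l, W l k * W l k = 1 := by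
  have h := (Matrix.mem_orthogonalGroup_iff' (Fin d) ℝ).mp hW
  have := congrFun (congrFun h k) k
  simpa [Matrix.mul_apply, Matrix.one_apply, Matrix.star_eq_conjTranspose,
    Matrix.conjTranspose_apply] using this

lemma risk_entry_bd (W : Matrix (Fin d) (Fin d) ℝ)
    (hW : W ∈ Matrix.orthogonalGroup (Fin d) ℝ) (i j : Fin d) : |W i j| ≤ 1 := by
  have h := risk_row_sq W hW i
  have h2 : W i j * W i j ≤ 1 := by
    rw [← h]
    exact Finset.single_le_sum (f := fun l => W i l * W i l)
      (fun l _ => mul_self_nonneg _) (Finset.mem_univ j)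
  nlinarith [abs_nonneg (W i j), sq_abs (W i j)]

lemma risk_bdd_int (f : Ω → ℝ) (hm : Measurable f) (C : ℝ) (hb : ∀ ω, |f ω| ≤ C) :
    Integrable f :=
  (integrable_const C).mono' hm.aestronglyMeasurable
    (Filter.Eventually.of_forall fun ω => by rw [Real.norm_eq_abs]; exact hb ω)

lemma risk_card_lt (d n : ℕ) (h : n ≤ d) :
    ∑ l : Fin d, (if (l:ℕ) < n then (1:ℝ) else 0) = n := by
  rw [Fin.sum_univ_eq_sum_range (fun m => if m < n then (1:ℝ) else 0)]
  rw [Finset.sum_ite]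
  have : Finset.filter (fun m => m < n) (Finset.range d) = Finset.range n := by
    ext m
    simp only [Finset.mem_filter, Finset.mem_range]
    constructor
    · rintro ⟨_, h2⟩; exact h2
    · intro h2; exact ⟨lt_of_lt_of_le h2 h, h2⟩
  rw [this]
  simp

lemma risk_inv_int (W : Ω → Matrix (Fin d) (Fin d) ℝ) (hW : Measurable W)
    (hHaar : ∀ V₀ ∈ Matrix.orthogonalGroup (Fin d) ℝ,
      Measure.map (fun a => V₀ * W a) (ℙ : Measure Ω) = Measure.map W (ℙ : Measure Ω))
    (V₀ : Matrix (Fin d) (Fin d) ℝ) (hV₀ : V₀ ∈ Matrix.orthogonalGroup (Fin d) ℝ)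
    (f : Matrix (Fin d) (Fin d) ℝ → ℝ) (hf : Measurable f) :
    ∫ a, f (V₀ * W a) = ∫ a, f (W a) := by
  have hVW : Measurable (fun a => V₀ * W a) := by
    rw [show (Measurable (fun a => V₀ * W a)) ↔ _ from measurable_pi_iff]
    intro i
    rw [measurable_pi_iff]
    intro j
    simp only [Matrix.mul_apply]
    exact Finset.measurable_sum _ fun l _ => (risk_entry_meas W hW l j).const_mul _
  rw [← integral_map hVW.aemeasurable hf.aestronglyMeasurable, hHaar V₀ hV₀,
    integral_map hW.aemeasurable hf.aestronglyMeasurable]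

lemma risk_moment (W : Ω → Matrix (Fin d) (Fin d) ℝ) (hW : Measurable W)
    (horth : ∀ a, W a ∈ Matrix.orthogonalGroup (Fin d) ℝ)
    (hHaar : ∀ V₀ ∈ Matrix.orthogonalGroup (Fin d) ℝ,
      Measure.map (fun a => V₀ * W a) (ℙ : Measure Ω) = Measure.map W (ℙ : Measure Ω))
    (i j k : Fin d) :
    ∫ a, W a i k * W a j k = if i = j then 1/(d:ℝ) else 0 := by
  have hfm : ∀ i j : Fin d, Measurable (fun M : Matrix (Fin d) (Fin d) ℝ => M i k * M j k) :=
    fun i j => ((measurable_pi_apply k).comp (measurable_pi_apply i)).fun_mul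
      ((measurable_pi_apply k).comp (measurable_pi_apply j))
  have hint : ∀ i j : Fin d, Integrable (fun a => W a i k * W a j k) := by
    intro i j
    refine (integrable_const (1:ℝ)).mono' ((risk_entry_meas W hW i k).mul
      (risk_entry_meas W hW j k)).aestronglyMeasurable (Filter.Eventually.of_forall fun a => ?_)
    rw [Real.norm_eq_abs, abs_mul]
    refine le_trans (mul_le_mul (risk_entry_bd _ (horth a) i k)
      (risk_entry_bd _ (horth a) j k) (abs_nonneg _) zero_le_one) ?_
    norm_num
  by_cases hij : i = j
  · subst hij
    simp only [if_pos rfl]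
    have hswap : ∀ i' : Fin d, ∫ a, W a i' k * W a i' k = ∫ a, W a i k * W a i k := by
      intro i'
      set σ := Equiv.swap i i' with hσ
      set V₀ : Matrix (Fin d) (Fin d) ℝ := Matrix.of (fun r s => if σ r = s then 1 else 0) with hV
      have happ : ∀ (M : Matrix (Fin d) (Fin d) ℝ) r s, (V₀ * M) r s = M (σ r) s := by
        intro M r s
        simp [hV, Matrix.mul_apply]
      have hV₀ : V₀ ∈ Matrix.orthogonalGroup (Fin d) ℝ := by
        rw [Matrix.mem_orthogonalGroup_iff]
        ext r s
        simp only [Matrix.mul_apply, Matrix.star_eq_conjTranspose, Matrix.conjTranspose_apply,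
          hV, Matrix.of_apply, Matrix.one_apply, star_trivial]
        rw [Finset.sum_eq_single (σ r)]
        · simp [Equiv.apply_eq_iff_eq, eq_comm]
        · intro b _ hb; simp [Ne.symm hb]
        · simp
      have := risk_inv_int W hW hHaar V₀ hV₀ (fun M => M i k * M i k) (hfm i i)
      simp only [happ] at this
      rw [← this, hσ]
      simp [Equiv.swap_apply_left]
    have hsum : ∑ i' : Fin d, ∫ a, W a i' k * W a i' k = 1 := by
      rw [← integral_finset_sum _ (fun i' _ => hint i' i')]
      have : ∀ a, ∑ i' : Fin d, W a i' k * W a i' k = 1 := fun a => risk_col_sq _ (horth a) k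
      simp only [this]
      simp
    rw [Finset.sum_congr rfl (fun i' _ => hswap i')] at hsum
    simp only [Finset.sum_const, Finset.card_univ, Fintype.card_fin, nsmul_eq_mul] at hsum
    have hd0 : (d:ℝ) ≠ 0 := by
      by_contra h
      rw [h, zero_mul] at hsum
      norm_num at hsum
    simp only [eq_div_iff hd0, ite_true, eq_self_iff_true]
    linarith [hsum]
  · simp only [if_neg hij]
    set V₀ : Matrix (Fin d) (Fin d) ℝ :=
      Matrix.diagonal (fun l => if l = i then (-1:ℝ) else 1) with hV
    have hV₀ : V₀ ∈ Matrix.orthogonalGroup (Fin d) ℝ := by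
      rw [Matrix.mem_orthogonalGroup_iff]
      simp only [hV, Matrix.star_eq_conjTranspose, Matrix.diagonal_conjTranspose]
      rw [Matrix.diagonal_transpose, Matrix.diagonal_mul_diagonal]
      convert Matrix.diagonal_one with l
      · by_cases h : l = i <;> simp [h]
    have := risk_inv_int W hW hHaar V₀ hV₀ (fun M => M i k * M j k) (hfm i j)
    have happi : ∀ a, (V₀ * W a) i k = - W a i k := by
      intro a; simp [hV, Matrix.diagonal_mul]
    have happj : ∀ a, (V₀ * W a) j k = W a j k := by
      intro a; simp [hV, Matrix.diagonal_mul, hij, Ne.symm]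
    simp only [happi, happj, neg_mul, integral_neg] at this
    linarith [this]

lemma risk_proj_entry (n : ℕ) (W : Matrix (Fin d) (Fin d) ℝ) (j k : Fin d) :
    (W * Matrix.diagonal (fun i : Fin d => if (i:ℕ) < n then (1:ℝ) else 0) * Wᵀ) j k
      = ∑ l : Fin d, (if (l:ℕ) < n then (1:ℝ) else 0) * (W j l * W k l) := by
  rw [Matrix.mul_apply]
  refine Finset.sum_congr rfl fun l _ => ?_
  rw [Matrix.mul_diagonal, Matrix.transpose_apply]
  ring

lemma risk_proj_meas (n : ℕ) (W : Ω → Matrix (Fin d) (Fin d) ℝ) (hW : Measurable W)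
    (j k : Fin d) :
    Measurable (fun a =>
      (W a * Matrix.diagonal (fun i : Fin d => if (i:ℕ) < n then (1:ℝ) else 0) * (W a)ᵀ) j k) := by
  simp only [risk_proj_entry]
  exact Finset.measurable_sum _ fun l _ =>
    ((risk_entry_meas W hW j l).mul (risk_entry_meas W hW k l)).const_mul _

lemma risk_proj_bd {n : ℕ} (W : Ω → Matrix (Fin d) (Fin d) ℝ)
    (horth : ∀ a, W a ∈ Matrix.orthogonalGroup (Fin d) ℝ) (a : Ω) (j k : Fin d) :
    |(W a * Matrix.diagonal (fun i : Fin d => if (i:ℕ) < n then (1:ℝ) else 0) * (W a)ᵀ) j k|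
      ≤ d := by
  rw [risk_proj_entry]
  calc |∑ l : Fin d, (if (l:ℕ) < n then (1:ℝ) else 0) * (W a j l * W a k l)|
      ≤ ∑ l : Fin d, |(if (l:ℕ) < n then (1:ℝ) else 0) * (W a j l * W a k l)| :=
        Finset.abs_sum_le_sum_abs _ _
    _ ≤ ∑ _l : Fin d, (1:ℝ) := by
        refine Finset.sum_le_sum fun l _ => ?_
        rw [abs_mul, abs_mul]
        have h1 : |if (l:ℕ) < n then (1:ℝ) else 0| ≤ 1 := by split <;> simp
        have h2 := risk_entry_bd (W a) (horth a) j l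
        have h3 := risk_entry_bd (W a) (horth a) k l
        exact mul_le_one₀ h1 (mul_nonneg (abs_nonneg _) (abs_nonneg _))
          (mul_le_one₀ h2 (abs_nonneg _) h3)
    _ = d := by simp

lemma risk_proj_int (n : ℕ) (hn : n ≤ d) (W : Ω → Matrix (Fin d) (Fin d) ℝ) (hW : Measurable W)
    (horth : ∀ a, W a ∈ Matrix.orthogonalGroup (Fin d) ℝ)
    (hHaar : ∀ V₀ ∈ Matrix.orthogonalGroup (Fin d) ℝ,
      Measure.map (fun a => V₀ * W a) (ℙ : Measure Ω) = Measure.map W (ℙ : Measure Ω))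
    (j k : Fin d) :
    ∫ a, (W a * Matrix.diagonal (fun i : Fin d => if (i:ℕ) < n then (1:ℝ) else 0) * (W a)ᵀ) j k
      = ((n:ℝ)/d) * (if j = k then 1 else 0) := by
  simp only [risk_proj_entry]
  have hterm : ∀ l : Fin d, Integrable (fun a =>
      (if (l:ℕ) < n then (1:ℝ) else 0) * (W a j l * W a k l)) := by
    intro l
    refine risk_bdd_int _ (((risk_entry_meas W hW j l).mul
      (risk_entry_meas W hW k l)).const_mul _) 1 fun a => ?_
    rw [abs_mul, abs_mul]
    have h1 : |if (l:ℕ) < n then (1:ℝ) else 0| ≤ 1 := by split <;> simp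
    have h2 := risk_entry_bd (W a) (horth a) j l
    have h3 := risk_entry_bd (W a) (horth a) k l
    exact mul_le_one₀ h1 (mul_nonneg (abs_nonneg _) (abs_nonneg _))
      (mul_le_one₀ h2 (abs_nonneg _) h3)
  rw [integral_finset_sum _ fun l _ => hterm l]
  have : ∀ l : Fin d, ∫ a, (if (l:ℕ) < n then (1:ℝ) else 0) * (W a j l * W a k l)
      = (if (l:ℕ) < n then (1:ℝ) else 0) * (if j = k then 1/(d:ℝ) else 0) := by
    intro l
    rw [MeasureTheory.integral_const_mul, risk_moment W hW horth hHaar j k l]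
  simp only [this, ← Finset.sum_mul, risk_card_lt d n hn]
  split <;> simp <;> ring

lemma risk_q_int (c : ℕ) (A B : Matrix (Fin c) (Fin d) ℝ) (P : Ω → Matrix (Fin d) (Fin d) ℝ)
    (hm : ∀ j k, Measurable fun ω => P ω j k) (C : ℝ) (hb : ∀ ω j k, |P ω j k| ≤ C)
    (r : ℝ) (hI : ∀ j k, ∫ ω, P ω j k = r * (if j = k then 1 else 0)) :
    Integrable (fun ω => ∑ i, ∑ j, ∑ k, (A i j * B i k) * P ω j k) ∧
    (∫ ω, ∑ i, ∑ j, ∑ k, (A i j * B i k) * P ω j k) = r * ∑ i, ∑ j, A i j * B i j := by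
  have hterm : ∀ (i : Fin c) (j k : Fin d),
      Integrable (fun ω => (A i j * B i k) * P ω j k) :=
    fun i j k => (risk_bdd_int _ (hm j k) C (fun ω => hb ω j k)).const_mul _
  have hint : ∀ (i : Fin c) (j : Fin d),
      Integrable (fun ω => ∑ k, (A i j * B i k) * P ω j k) :=
    fun i j => integrable_finset_sum _ fun k _ => hterm i j k
  have hint2 : ∀ (i : Fin c),
      Integrable (fun ω => ∑ j, ∑ k, (A i j * B i k) * P ω j k) :=
    fun i => integrable_finset_sum _ fun j _ => hint i j
  constructor
  · exact integrable_finset_sum _ fun i _ => hint2 i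
  · rw [integral_finset_sum _ fun i _ => hint2 i]
    rw [Finset.mul_sum]
    refine Finset.sum_congr rfl fun i _ => ?_
    rw [integral_finset_sum _ fun j _ => hint i j, Finset.mul_sum]
    refine Finset.sum_congr rfl fun j _ => ?_
    rw [integral_finset_sum _ fun k _ => hterm i j k]
    have : ∀ k, ∫ ω, (A i j * B i k) * P ω j k
        = (A i j * B i k) * (r * (if j = k then 1 else 0)) :=
      fun k => by rw [MeasureTheory.integral_const_mul, hI j k]
    simp only [this, mul_ite, mul_one, mul_zero]
    rw [Finset.sum_ite_eq Finset.univ j (fun k => A i j * B i k * r)]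
    simp only [Finset.mem_univ, if_pos]
    ring

lemma risk_F2_trace {c : ℕ} (M : Matrix (Fin c) (Fin d) ℝ) :
    ∑ i, ∑ j, M i j * M i j = Matrix.trace (M * Mᵀ) := by
  simp [Matrix.trace, Matrix.mul_apply, Matrix.diag]

lemma risk_tr_expand {c : ℕ} (A B : Matrix (Fin c) (Fin d) ℝ) (P : Matrix (Fin d) (Fin d) ℝ) :
    Matrix.trace (A * P * Bᵀ) = ∑ i, ∑ j, ∑ k, (A i j * B i k) * P j k := by
  simp only [Matrix.trace, Matrix.diag, Matrix.mul_apply, Matrix.transpose_apply,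
    Finset.sum_mul, Finset.mul_sum]
  refine Finset.sum_congr rfl fun i _ => ?_
  rw [Finset.sum_comm]
  refine Finset.sum_congr rfl fun j _ => ?_
  refine Finset.sum_congr rfl fun k _ => ?_
  ring

lemma risk_keyid {c : ℕ} (A B : Matrix (Fin c) (Fin d) ℝ) (P : Matrix (Fin d) (Fin d) ℝ)
    (hPs : Pᵀ = P) (hPi : P * P = P) :
    ∑ i, ∑ j, (B - A * P) i j * (B - A * P) i j =
      (∑ i, ∑ j, B i j * B i j) - 2 * (∑ i, ∑ j, ∑ k, (A i j * B i k) * P j k)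
        + ∑ i, ∑ j, ∑ k, (A i j * A i k) * P j k := by
  rw [risk_F2_trace, risk_F2_trace, ← risk_tr_expand A B P, ← risk_tr_expand A A P]
  have expand : (B - A * P) * (B - A * P)ᵀ =
      B * Bᵀ - A * P * Bᵀ - B * (A * P)ᵀ + A * P * (A * P)ᵀ := by
    rw [Matrix.transpose_sub]
    rw [Matrix.sub_mul, Matrix.mul_sub, Matrix.mul_sub]
    abel
  rw [expand]
  have h1 : A * P * (A * P)ᵀ = A * P * Aᵀ := by
    rw [Matrix.transpose_mul, hPs, ← Matrix.mul_assoc, Matrix.mul_assoc A P P, hPi]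
  have h2 : Matrix.trace (B * (A * P)ᵀ) = Matrix.trace (A * P * Bᵀ) := by
    rw [Matrix.trace_mul_comm, ← Matrix.trace_transpose, Matrix.transpose_mul,
      Matrix.transpose_transpose, Matrix.trace_mul_comm]
  rw [h1, Matrix.trace_add, Matrix.trace_sub, Matrix.trace_sub, h2]
  ring

lemma risk_F2_sub_comm {c : ℕ} (X Y : Matrix (Fin c) (Fin d) ℝ) :
    ∑ i, ∑ j, (X - Y) i j * (X - Y) i j = ∑ i, ∑ j, (Y - X) i j * (Y - X) i j := by
  refine Finset.sum_congr rfl fun i _ => Finset.sum_congr rfl fun j _ => ?_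
  simp only [Matrix.sub_apply]
  ring

lemma risk_proj_sym (n : ℕ) (W : Matrix (Fin d) (Fin d) ℝ) :
    (W * Matrix.diagonal (fun i : Fin d => if (i:ℕ) < n then (1:ℝ) else 0) * Wᵀ)ᵀ
      = W * Matrix.diagonal (fun i : Fin d => if (i:ℕ) < n then (1:ℝ) else 0) * Wᵀ := by
  rw [Matrix.transpose_mul, Matrix.transpose_mul, Matrix.transpose_transpose,
    Matrix.diagonal_transpose, Matrix.mul_assoc]

lemma risk_proj_idem (n : ℕ) (W : Matrix (Fin d) (Fin d) ℝ)
    (hW : W ∈ Matrix.orthogonalGroup (Fin d) ℝ) :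
    (W * Matrix.diagonal (fun i : Fin d => if (i:ℕ) < n then (1:ℝ) else 0) * Wᵀ) *
      (W * Matrix.diagonal (fun i : Fin d => if (i:ℕ) < n then (1:ℝ) else 0) * Wᵀ)
      = W * Matrix.diagonal (fun i : Fin d => if (i:ℕ) < n then (1:ℝ) else 0) * Wᵀ := by
  have hWW : Wᵀ * W = 1 := by
    have h2 := (Matrix.mem_orthogonalGroup_iff' (Fin d) ℝ).mp hW
    simpa [Matrix.star_eq_conjTranspose, Matrix.conjTranspose] using h2
  set D := Matrix.diagonal (fun i : Fin d => if (i:ℕ) < n then (1:ℝ) else 0) with hD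
  have hDD : D * D = D := by
    rw [hD, Matrix.diagonal_mul_diagonal]
    apply congrArg Matrix.diagonal
    funext i
    by_cases h : (i:ℕ) < n <;> simp [h]
  calc (W * D * Wᵀ) * (W * D * Wᵀ) = W * (D * ((Wᵀ * W) * (D * Wᵀ))) := by
        simp only [Matrix.mul_assoc]
    _ = W * (D * (D * Wᵀ)) := by rw [hWW, Matrix.one_mul]
    _ = W * ((D * D) * Wᵀ) := by rw [Matrix.mul_assoc]
    _ = W * (D * Wᵀ) := by rw [hDD]
    _ = W * D * Wᵀ := by rw [Matrix.mul_assoc]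

/-- Step B: expected Frobenius norm of `A * P b − A` over Haar projections. -/
lemma risk_stepB (n : ℕ) (hn : n ≤ d) {c : ℕ} (A : Matrix (Fin c) (Fin d) ℝ)
    (W : Ω → Matrix (Fin d) (Fin d) ℝ) (hW : Measurable W)
    (horth : ∀ a, W a ∈ Matrix.orthogonalGroup (Fin d) ℝ)
    (hHaar : ∀ V₀ ∈ Matrix.orthogonalGroup (Fin d) ℝ,
      Measure.map (fun a => V₀ * W a) (ℙ : Measure Ω) = Measure.map W (ℙ : Measure Ω)) :
    ∫ b, ∑ i, ∑ j,
        (A * (W b * Matrix.diagonal (fun i : Fin d => if (i:ℕ) < n then (1:ℝ) else 0) * (W b)ᵀ)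
          - A) i j *
        (A * (W b * Matrix.diagonal (fun i : Fin d => if (i:ℕ) < n then (1:ℝ) else 0) * (W b)ᵀ)
          - A) i j
      = (1 - (n:ℝ)/d) * ∑ i, ∑ j, A i j * A i j := by
  have hq := risk_q_int c A A
    (fun b => W b * Matrix.diagonal (fun i : Fin d => if (i:ℕ) < n then (1:ℝ) else 0) * (W b)ᵀ)
    (fun j k => risk_proj_meas n W hW j k) d (fun b j k => risk_proj_bd W horth b j k)
    ((n:ℝ)/d) (fun j k => risk_proj_int n hn W hW horth hHaar j k)
  have e2 : ∀ b, (∑ i, ∑ j,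
      (A * (W b * Matrix.diagonal (fun i : Fin d => if (i:ℕ) < n then (1:ℝ) else 0) * (W b)ᵀ)
        - A) i j *
      (A * (W b * Matrix.diagonal (fun i : Fin d => if (i:ℕ) < n then (1:ℝ) else 0) * (W b)ᵀ)
        - A) i j)
      = (∑ i, ∑ j, A i j * A i j) - ∑ i, ∑ j, ∑ k, (A i j * A i k) *
          (W b * Matrix.diagonal (fun i : Fin d => if (i:ℕ) < n then (1:ℝ) else 0) * (W b)ᵀ) j k
      := by
    intro b
    rw [risk_F2_sub_comm, risk_keyid A A _ (risk_proj_sym n (W b))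
      (risk_proj_idem n (W b) (horth b))]
    ring
  simp only [e2]
  rw [integral_sub (integrable_const _) hq.1, integral_const, probReal_univ,
    smul_eq_mul, one_mul, hq.2]
  ring

/-- Step C: expected Frobenius norm of `B − A * P a` over Haar projections. -/
lemma risk_stepC (n : ℕ) (hn : n ≤ d) {c : ℕ} (A B : Matrix (Fin c) (Fin d) ℝ)
    (W : Ω → Matrix (Fin d) (Fin d) ℝ) (hW : Measurable W)
    (horth : ∀ a, W a ∈ Matrix.orthogonalGroup (Fin d) ℝ)
    (hHaar : ∀ V₀ ∈ Matrix.orthogonalGroup (Fin d) ℝ,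
      Measure.map (fun a => V₀ * W a) (ℙ : Measure Ω) = Measure.map W (ℙ : Measure Ω)) :
    ∫ a, ∑ i, ∑ j,
        (B - A * (W a * Matrix.diagonal (fun i : Fin d => if (i:ℕ) < n then (1:ℝ) else 0)
          * (W a)ᵀ)) i j *
        (B - A * (W a * Matrix.diagonal (fun i : Fin d => if (i:ℕ) < n then (1:ℝ) else 0)
          * (W a)ᵀ)) i j
      = (∑ i, ∑ j, B i j * B i j) - 2 * ((n:ℝ)/d) * (∑ i, ∑ j, A i j * B i j)
          + ((n:ℝ)/d) * ∑ i, ∑ j, A i j * A i j := by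
  have hq1 := risk_q_int c A B
    (fun a => W a * Matrix.diagonal (fun i : Fin d => if (i:ℕ) < n then (1:ℝ) else 0) * (W a)ᵀ)
    (fun j k => risk_proj_meas n W hW j k) d (fun a j k => risk_proj_bd W horth a j k)
    ((n:ℝ)/d) (fun j k => risk_proj_int n hn W hW horth hHaar j k)
  have hq2 := risk_q_int c A A
    (fun a => W a * Matrix.diagonal (fun i : Fin d => if (i:ℕ) < n then (1:ℝ) else 0) * (W a)ᵀ)
    (fun j k => risk_proj_meas n W hW j k) d (fun a j k => risk_proj_bd W horth a j k)
    ((n:ℝ)/d) (fun j k => risk_proj_int n hn W hW horth hHaar j k)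
  have e3 : ∀ a, (∑ i, ∑ j,
      (B - A * (W a * Matrix.diagonal (fun i : Fin d => if (i:ℕ) < n then (1:ℝ) else 0)
        * (W a)ᵀ)) i j *
      (B - A * (W a * Matrix.diagonal (fun i : Fin d => if (i:ℕ) < n then (1:ℝ) else 0)
        * (W a)ᵀ)) i j)
      = (∑ i, ∑ j, B i j * B i j)
        - 2 * (∑ i, ∑ j, ∑ k, (A i j * B i k) *
            (W a * Matrix.diagonal (fun i : Fin d => if (i:ℕ) < n then (1:ℝ) else 0)
              * (W a)ᵀ) j k)
        + ∑ i, ∑ j, ∑ k, (A i j * A i k) *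
            (W a * Matrix.diagonal (fun i : Fin d => if (i:ℕ) < n then (1:ℝ) else 0)
              * (W a)ᵀ) j k :=
    fun a => risk_keyid A B _ (risk_proj_sym n (W a)) (risk_proj_idem n (W a) (horth a))
  simp only [e3]
  have hg : Integrable (fun a => 2 * ∑ i, ∑ j, ∑ k, (A i j * B i k) *
      (W a * Matrix.diagonal (fun i : Fin d => if (i:ℕ) < n then (1:ℝ) else 0) * (W a)ᵀ) j k) :=
    hq1.1.const_mul 2
  have hf : Integrable (fun a => (∑ i, ∑ j, B i j * B i j) - 2 * ∑ i, ∑ j, ∑ k, (A i j * B i k) *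
      (W a * Matrix.diagonal (fun i : Fin d => if (i:ℕ) < n then (1:ℝ) else 0) * (W a)ᵀ) j k) :=
    (integrable_const _).sub hg
  have hh : Integrable (fun a => ∑ i, ∑ j, ∑ k, (A i j * A i k) *
      (W a * Matrix.diagonal (fun i : Fin d => if (i:ℕ) < n then (1:ℝ) else 0) * (W a)ᵀ) j k) :=
    hq2.1
  rw [integral_add hf hh, integral_sub (integrable_const _) hg, integral_const, probReal_univ,
    smul_eq_mul, one_mul, MeasureTheory.integral_const_mul, hq1.2, hq2.2]
  ring

lemma risk_iso_int {c : ℕ} {Ω₁ : Type} [MeasureSpace Ω₁] [IsProbabilityMeasure (ℙ : Measure Ω₁)]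
    (x : Ω₁ → Fin d → ℝ) (hxmeas : Measurable x)
    (hiso : ∀ i j, (∫ ω₁, x ω₁ i * x ω₁ j) = if i = j then (1 : ℝ) else 0)
    (N : Matrix (Fin c) (Fin d) ℝ) :
    ∫ ω₁, ∑ i, ((N *ᵥ x ω₁) i)^2 = ∑ i, ∑ j, N i j * N i j := by
  have hxm : ∀ j, Measurable fun ω => x ω j := fun j => (measurable_pi_apply j).comp hxmeas
  have hx2 : ∀ j, Integrable (fun ω => x ω j * x ω j) := by
    intro j
    by_contra h
    have := hiso j j
    rw [integral_undef h] at this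
    simp at this
  have hxjk : ∀ j k, Integrable (fun ω => x ω j * x ω k) := by
    intro j k
    refine (((hx2 j).add (hx2 k)).const_mul (1/2)).mono'
      ((hxm j).mul (hxm k)).aestronglyMeasurable (Filter.Eventually.of_forall fun ω => ?_)
    simp only [Pi.add_apply]
    rw [Real.norm_eq_abs, abs_mul]
    nlinarith [sq_nonneg (|x ω j| - |x ω k|), sq_abs (x ω j), sq_abs (x ω k),
      abs_nonneg (x ω j), abs_nonneg (x ω k)]
  have hpt : ∀ ω, ∑ i, ((N *ᵥ x ω) i)^2
      = ∑ i, ∑ j, ∑ k, (N i j * N i k) * (x ω j * x ω k) := by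
    intro ω
    refine Finset.sum_congr rfl fun i _ => ?_
    rw [Matrix.mulVec, show (fun j => N i j) ⬝ᵥ x ω = ∑ j, N i j * x ω j from rfl]
    rw [pow_two, Finset.sum_mul_sum]
    refine Finset.sum_congr rfl fun j _ => Finset.sum_congr rfl fun k _ => ?_
    ring
  simp only [hpt]
  have hterm : ∀ (i : Fin c) (j k : Fin d),
      Integrable (fun ω => (N i j * N i k) * (x ω j * x ω k)) :=
    fun i j k => (hxjk j k).const_mul _
  rw [integral_finset_sum _ fun i _ => integrable_finset_sum _ fun j _ =>
    integrable_finset_sum _ fun k _ => hterm i j k]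
  refine Finset.sum_congr rfl fun i _ => ?_
  rw [integral_finset_sum _ fun j _ => integrable_finset_sum _ fun k _ => hterm i j k]
  refine Finset.sum_congr rfl fun j _ => ?_
  rw [integral_finset_sum _ fun k _ => hterm i j k]
  have : ∀ k, ∫ ω, (N i j * N i k) * (x ω j * x ω k)
      = (N i j * N i k) * (if j = k then 1 else 0) := by
    intro k
    rw [MeasureTheory.integral_const_mul, hiso j k]
  simp only [this, mul_ite, mul_one, mul_zero]
  rw [Finset.sum_ite_eq Finset.univ j (fun k => N i j * N i k)]
  simp

end RiskHelpers

/-- risk of the translated predictor `ω̂_trans = ω̂_s + ω̂_c` with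
`ω̂_s = y_s X_s†`, `ω̂_c = (y_t − ω̂_s X_t) X_t†`, independent Haar-uniform column
spans of `X_s, X_t` and isotropic independent test point:
`R(ω̂_trans) = (1 − n_t/d)[‖ω_s − ω_t‖_F² + (1 − n_s/d)(‖ω_t‖_F² − ‖ω_s − ω_t‖_F²)]`,
i.e. `[ρ + (1 − n_s/d)(1 − ρ)] R(ω̂_b)` with `ρ = ‖ω_s − ω_t‖_F²/‖ω_t‖_F²` and
baseline risk `R(ω̂_b) = (1 − n_t/d)‖ω_t‖_F²`. -/
theorem risk_translated_predictor
    (d ns nt c : ℕ) (hns : ns ≤ d) (hnt : nt ≤ d) (hd : 0 < d)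
    (Ω₁ Ωs Ωt : Type) [MeasureSpace Ω₁] [MeasureSpace Ωs] [MeasureSpace Ωt]
    [IsProbabilityMeasure (ℙ : Measure Ω₁)] [IsProbabilityMeasure (ℙ : Measure Ωs)]
    [IsProbabilityMeasure (ℙ : Measure Ωt)]
    -- isotropic test point
    (x : Ω₁ → Fin d → ℝ) (hxmeas : Measurable x)
    (hiso : ∀ i j, (∫ ω₁, x ω₁ i * x ω₁ j) = if i = j then (1 : ℝ) else 0)
    -- source data matrix with Haar-uniform column space
    (Xs : Ωs → Matrix (Fin d) (Fin ns) ℝ) (hXsmeas : Measurable Xs)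
    (Xsd : Ωs → Matrix (Fin ns) (Fin d) ℝ)
    (hXspinv : ∀ a, IsMoorePenrose (Xs a) (Xsd a))
    (Ws : Ωs → Matrix (Fin d) (Fin d) ℝ) (hWsmeas : Measurable Ws)
    (hWsorth : ∀ a, Ws a ∈ Matrix.orthogonalGroup (Fin d) ℝ)
    (hHaars : ∀ V₀ ∈ Matrix.orthogonalGroup (Fin d) ℝ,
      Measure.map (fun a => V₀ * Ws a) (ℙ : Measure Ωs) = Measure.map Ws (ℙ : Measure Ωs))
    (hprojs : ∀ a, Xs a * Xsd a =
      Ws a * Matrix.diagonal (fun i : Fin d => if (i : ℕ) < ns then (1 : ℝ) else 0) * (Ws a)ᵀ)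
    -- target data matrix with Haar-uniform column space
    (Xt : Ωt → Matrix (Fin d) (Fin nt) ℝ) (hXtmeas : Measurable Xt)
    (Xtd : Ωt → Matrix (Fin nt) (Fin d) ℝ)
    (hXtpinv : ∀ b, IsMoorePenrose (Xt b) (Xtd b))
    (Wt : Ωt → Matrix (Fin d) (Fin d) ℝ) (hWtmeas : Measurable Wt)
    (hWtorth : ∀ b, Wt b ∈ Matrix.orthogonalGroup (Fin d) ℝ)
    (hHaart : ∀ V₀ ∈ Matrix.orthogonalGroup (Fin d) ℝ,
      Measure.map (fun b => V₀ * Wt b) (ℙ : Measure Ωt) = Measure.map Wt (ℙ : Measure Ωt))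
    (hprojt : ∀ b, Xt b * Xtd b =
      Wt b * Matrix.diagonal (fun i : Fin d => if (i : ℕ) < nt then (1 : ℝ) else 0) * (Wt b)ᵀ)
    -- source and target models (same label dimension c)
    (ωs ωt : Matrix (Fin c) (Fin d) ℝ)
    (hωt : (∑ i, ∑ j, (ωt i j) ^ 2) ≠ 0)
    -- estimated source and correction models
    (ws : Ωs → Matrix (Fin c) (Fin d) ℝ) (hws : ∀ a, ws a = (ωs * Xs a) * Xsd a)
    (wc : Ωs → Ωt → Matrix (Fin c) (Fin d) ℝ)
    (hwc : ∀ a b, wc a b = (ωt * Xt b - ws a * Xt b) * Xtd b)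
    (ρ : ℝ)
    (hρ : ρ = (∑ i, ∑ j, ((ωs - ωt) i j) ^ 2) / (∑ i, ∑ j, (ωt i j) ^ 2)) :
    (∫ a, ∫ b, ∫ ω₁, ∑ i, (((ws a + wc a b) *ᵥ x ω₁) i - (ωt *ᵥ x ω₁) i) ^ 2) =
      (1 - (nt : ℝ) / d) * ((∑ i, ∑ j, ((ωs - ωt) i j) ^ 2) +
        (1 - (ns : ℝ) / d) * ((∑ i, ∑ j, (ωt i j) ^ 2) - ∑ i, ∑ j, ((ωs - ωt) i j) ^ 2)) ∧
    (∫ a, ∫ b, ∫ ω₁, ∑ i, (((ws a + wc a b) *ᵥ x ω₁) i - (ωt *ᵥ x ω₁) i) ^ 2) =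
      (ρ + (1 - (ns : ℝ) / d) * (1 - ρ)) * ((1 - (nt : ℝ) / d) * ∑ i, ∑ j, (ωt i j) ^ 2) := by
  -- the translated predictor error matrix
  have hM : ∀ a b, ws a + wc a b - ωt =
      (ωt - ωs * (Ws a * Matrix.diagonal (fun i : Fin d => if (i : ℕ) < ns then (1 : ℝ) else 0)
          * (Ws a)ᵀ)) *
        (Wt b * Matrix.diagonal (fun i : Fin d => if (i : ℕ) < nt then (1 : ℝ) else 0)
          * (Wt b)ᵀ) -
      (ωt - ωs * (Ws a * Matrix.diagonal (fun i : Fin d => if (i : ℕ) < ns then (1 : ℝ) else 0)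
          * (Ws a)ᵀ)) := by
    intro a b
    have h1 : ws a = ωs * (Ws a * Matrix.diagonal
        (fun i : Fin d => if (i : ℕ) < ns then (1 : ℝ) else 0) * (Ws a)ᵀ) := by
      rw [hws a, Matrix.mul_assoc, hprojs a]
    have h2 : wc a b = (ωt - ωs * (Ws a * Matrix.diagonal
        (fun i : Fin d => if (i : ℕ) < ns then (1 : ℝ) else 0) * (Ws a)ᵀ)) *
        (Wt b * Matrix.diagonal (fun i : Fin d => if (i : ℕ) < nt then (1 : ℝ) else 0)
          * (Wt b)ᵀ) := by
      rw [hwc a b, ← Matrix.sub_mul, Matrix.mul_assoc, hprojt b, h1]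
    rw [h1, h2]
    abel
  -- inner integral over the isotropic test point
  have h1int : ∀ a b, (∫ ω₁, ∑ i, (((ws a + wc a b) *ᵥ x ω₁) i - (ωt *ᵥ x ω₁) i) ^ 2)
      = ∑ i, ∑ j,
        ((ωt - ωs * (Ws a * Matrix.diagonal (fun i : Fin d => if (i : ℕ) < ns then (1 : ℝ) else 0)
            * (Ws a)ᵀ)) *
          (Wt b * Matrix.diagonal (fun i : Fin d => if (i : ℕ) < nt then (1 : ℝ) else 0)
            * (Wt b)ᵀ) -
        (ωt - ωs * (Ws a * Matrix.diagonal (fun i : Fin d => if (i : ℕ) < ns then (1 : ℝ) else 0)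
            * (Ws a)ᵀ))) i j *
        ((ωt - ωs * (Ws a * Matrix.diagonal (fun i : Fin d => if (i : ℕ) < ns then (1 : ℝ) else 0)
            * (Ws a)ᵀ)) *
          (Wt b * Matrix.diagonal (fun i : Fin d => if (i : ℕ) < nt then (1 : ℝ) else 0)
            * (Wt b)ᵀ) -
        (ωt - ωs * (Ws a * Matrix.diagonal (fun i : Fin d => if (i : ℕ) < ns then (1 : ℝ) else 0)
            * (Ws a)ᵀ))) i j := by
    intro a b
    have e1 : ∀ ω₁, (∑ i, (((ws a + wc a b) *ᵥ x ω₁) i - (ωt *ᵥ x ω₁) i) ^ 2)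
        = ∑ i, (((ws a + wc a b - ωt) *ᵥ x ω₁) i) ^ 2 := by
      intro ω₁
      refine Finset.sum_congr rfl fun i _ => ?_
      rw [Matrix.sub_mulVec]
      rfl
    simp only [e1, hM a b]
    exact risk_iso_int x hxmeas hiso _
  simp only [h1int]
  -- integral over the target projection
  have h2int : ∀ a, (∫ b, ∑ i, ∑ j,
      ((ωt - ωs * (Ws a * Matrix.diagonal (fun i : Fin d => if (i : ℕ) < ns then (1 : ℝ) else 0)
          * (Ws a)ᵀ)) *
        (Wt b * Matrix.diagonal (fun i : Fin d => if (i : ℕ) < nt then (1 : ℝ) else 0)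
          * (Wt b)ᵀ) -
      (ωt - ωs * (Ws a * Matrix.diagonal (fun i : Fin d => if (i : ℕ) < ns then (1 : ℝ) else 0)
          * (Ws a)ᵀ))) i j *
      ((ωt - ωs * (Ws a * Matrix.diagonal (fun i : Fin d => if (i : ℕ) < ns then (1 : ℝ) else 0)
          * (Ws a)ᵀ)) *
        (Wt b * Matrix.diagonal (fun i : Fin d => if (i : ℕ) < nt then (1 : ℝ) else 0)
          * (Wt b)ᵀ) -
      (ωt - ωs * (Ws a * Matrix.diagonal (fun i : Fin d => if (i : ℕ) < ns then (1 : ℝ) else 0)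
          * (Ws a)ᵀ))) i j)
      = (1 - (nt : ℝ) / d) * ∑ i, ∑ j,
        (ωt - ωs * (Ws a * Matrix.diagonal (fun i : Fin d => if (i : ℕ) < ns then (1 : ℝ) else 0)
          * (Ws a)ᵀ)) i j *
        (ωt - ωs * (Ws a * Matrix.diagonal (fun i : Fin d => if (i : ℕ) < ns then (1 : ℝ) else 0)
          * (Ws a)ᵀ)) i j :=
    fun a => risk_stepB nt hnt _ Wt hWtmeas hWtorth hHaart
  simp only [h2int]
  rw [MeasureTheory.integral_const_mul]
  -- integral over the source projection
  rw [risk_stepC ns hns ωs ωt Ws hWsmeas hWsorth hHaars]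
  -- pure algebra from here on
  have hΔ : ∑ i, ∑ j, (ωs - ωt) i j * (ωs - ωt) i j
      = (∑ i, ∑ j, ωs i j * ωs i j) - 2 * (∑ i, ∑ j, ωs i j * ωt i j)
        + ∑ i, ∑ j, ωt i j * ωt i j := by
    have h : ∀ i j, (ωs - ωt) i j * (ωs - ωt) i j
        = ωs i j * ωs i j - 2 * (ωs i j * ωt i j) + ωt i j * ωt i j := by
      intro i j
      simp only [Matrix.sub_apply]
      ring
    simp only [h, Finset.sum_add_distrib, Finset.sum_sub_distrib, ← Finset.mul_sum]
  have key : (∑ i, ∑ j, ωt i j * ωt i j) - 2 * ((ns : ℝ) / d) * (∑ i, ∑ j, ωs i j * ωt i j)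
        + ((ns : ℝ) / d) * ∑ i, ∑ j, ωs i j * ωs i j
      = (∑ i, ∑ j, ((ωs - ωt) i j) ^ 2) +
        (1 - (ns : ℝ) / d) * ((∑ i, ∑ j, (ωt i j) ^ 2) - ∑ i, ∑ j, ((ωs - ωt) i j) ^ 2) := by
    simp only [pow_two]
    rw [hΔ]
    ring
  constructor
  · rw [key]
  · rw [key, hρ]
    field_simp
end

section
/- If n_s = d (so the source model is exactly recovered), the translated predictor risk equals (‖ω_s − ω_t‖_F²/‖ω_t‖_F²) · R(ω̂_b), where R(ω̂_b) = (1 − n_t/d)‖ω_t‖_F². Consequently, the translated predictor outperforms the baseline if and only if ‖ω_s − ω_t‖_F < ‖ω_t‖_F; in particular, if ‖ω_s‖_F = ‖ω_t‖_F, this holds if and only if the angle between ω_s and ω_t (viewed as vectors under the Frobenius inner product) is less than π/3, equivalently ⟨ω_s, ω_t⟩ > ‖ω_t‖_F²/2. -/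
open Matrix

/-- Squared Frobenius norm. -/
def frobSq {c d : ℕ} (A : Matrix (Fin c) (Fin d) ℝ) : ℝ := ∑ i, ∑ j, (A i j) ^ 2

/-- Frobenius norm. -/
noncomputable def frob {c d : ℕ} (A : Matrix (Fin c) (Fin d) ℝ) : ℝ :=
  Real.sqrt (frobSq A)

lemma frobSq_nonneg {c d : ℕ} (A : Matrix (Fin c) (Fin d) ℝ) : 0 ≤ frobSq A :=
  Finset.sum_nonneg fun _ _ => Finset.sum_nonneg fun _ _ => sq_nonneg _

lemma frobSq_sub_expand {c d : ℕ} (A B : Matrix (Fin c) (Fin d) ℝ) :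
    frobSq (A - B) = frobSq A + frobSq B - 2 * ∑ i, ∑ j, A i j * B i j := by
  simp only [frobSq, Matrix.sub_apply, Finset.mul_sum, ← Finset.sum_add_distrib,
    ← Finset.sum_sub_distrib]
  exact Finset.sum_congr rfl fun i _ => Finset.sum_congr rfl fun j _ => by ring

/-- with `n_s = d`, the translated predictor risk equals
`(‖ω_s − ω_t‖_F²/‖ω_t‖_F²) R(ω̂_b)` with `R(ω̂_b) = (1 − n_t/d)‖ω_t‖_F²`; the
translated predictor outperforms the baseline iff `‖ω_s − ω_t‖_F < ‖ω_t‖_F`, and if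
`‖ω_s‖_F = ‖ω_t‖_F` this holds iff `⟨ω_s, ω_t⟩ > ‖ω_t‖_F²/2`. -/
theorem translated_predictor_exact_source
    (c d nt : ℕ) (hnt : nt < d) (hd : 0 < d)
    (ωs ωt : Matrix (Fin c) (Fin d) ℝ) (hωt : frobSq ωt ≠ 0)
    (Rb Rtrans : ℝ)
    (hRb : Rb = (1 - (nt : ℝ) / d) * frobSq ωt)
    -- the translated risk formula `[ρ + (1 − n_s/d)(1 − ρ)] R(ω̂_b)` with `n_s = d`
    (hRtrans : Rtrans = (frobSq (ωs - ωt) / frobSq ωt) * Rb) :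
    (Rtrans < Rb ↔ frob (ωs - ωt) < frob ωt) ∧
    (frob ωs = frob ωt →
      (Rtrans < Rb ↔ frobSq ωt / 2 < ∑ i, ∑ j, ωs i j * ωt i j)) := by
  have ht : 0 < frobSq ωt := lt_of_le_of_ne (frobSq_nonneg ωt) (Ne.symm hωt)
  have hRbpos : 0 < Rb := by
    rw [hRb]
    apply mul_pos _ ht
    have : (nt : ℝ) / d < 1 := by
      rw [div_lt_one (by exact_mod_cast hd)]
      exact_mod_cast hnt
    linarith
  have key : Rtrans < Rb ↔ frobSq (ωs - ωt) < frobSq ωt := by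
    rw [hRtrans]
    constructor
    · intro h
      by_contra hle
      push_neg at hle
      have : 1 ≤ frobSq (ωs - ωt) / frobSq ωt := (one_le_div ht).mpr hle
      nlinarith
    · intro h
      have : frobSq (ωs - ωt) / frobSq ωt < 1 := (div_lt_one ht).mpr h
      nlinarith
  constructor
  · rw [key, frob, frob]
    exact (Real.sqrt_lt_sqrt_iff (frobSq_nonneg _)).symm
  · intro heq
    have heqsq : frobSq ωs = frobSq ωt := by
      have := congrArg (· ^ 2) heq
      simpa [frob, Real.sq_sqrt (frobSq_nonneg ωs), Real.sq_sqrt (frobSq_nonneg ωt)] using this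
    rw [key, frobSq_sub_expand, heqsq]
    constructor <;> intro h <;> linarith
end
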